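/- arXiv:2512.08055 — 3 statements merged into one kernel-verified Lean document; each statement's English description precedes it below -/
import Mathlib

section
/- The fairness-loss function L(P) = (1/K) Σₖ (1ₖᵀ p(P) − φₖ)², where p(P) is the PageRank vector as a function of the row-stochastic transition matrix P, is not a convex function of P on the set of row-stochastic matrices. Concretely, for n = 3, γ ∈ (0,1), uniform restart vector v = (1/3,1/3,1/3), groups {1} and {2,3}, there exist row-stochastic matrices P₁, P₂ and targets φ with L(P₁) = L(P₂) = 0 but L((P₁+P₂)/2) > 0. -/
/-!
PageRank `p` is the unique solution of the stationarity equation `p = γ v + (1 - γ) Pᵀ p`, the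
system being nonsingular for row-stochastic `P` by Gershgorin. On `P₁` and `P₂` the mass of
group `{a}` is exactly `φ₁`, so both losses vanish. Their midpoint is doubly stochastic, so its
PageRank is the uniform restart vector itself, and the mass `1/3` of `{a}` falls short of `φ₁`
by `(1 - γ)² / (3 (2 - γ)) > 0`.
-/

open Finset Matrix

section PageRank

variable {n : Type*} [Fintype n] [DecidableEq n]

noncomputable def pageRank (γ : ℝ) (v : n → ℝ) (P : Matrix n n ℝ) : n → ℝ :=
  γ • ((1 - (1 - γ) • Pᵀ)⁻¹ *ᵥ v)

theorem det_one_sub_smul_transpose_ne_zero {P : Matrix n n ℝ} (hP : P ∈ rowStochastic ℝ n)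
    {β : ℝ} (hβ0 : 0 ≤ β) (hβ1 : β < 1) : (1 - β • Pᵀ).det ≠ 0 := by
  refine det_ne_zero_of_sum_col_lt_diag fun k => ?_
  have hoff : ∀ i ∈ univ.erase k, ‖(1 - β • Pᵀ) i k‖ = β * P k i := fun i hi => by
    rw [Matrix.sub_apply, one_apply_ne (ne_of_mem_erase hi), Matrix.smul_apply, transpose_apply,
      smul_eq_mul, zero_sub, norm_neg,
      Real.norm_of_nonneg (mul_nonneg hβ0 (nonneg_of_mem_rowStochastic hP))]
  have hPkk : P k k ≤ 1 := le_one_of_mem_rowStochastic hP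
  have hdiag : ‖(1 - β • Pᵀ) k k‖ = 1 - β * P k k := by
    rw [Matrix.sub_apply, one_apply_eq, Matrix.smul_apply, transpose_apply, smul_eq_mul,
      Real.norm_of_nonneg (by nlinarith)]
  have hrow : ∑ i ∈ univ.erase k, P k i = 1 - P k k := by
    rw [← sum_row_of_mem_rowStochastic hP k, ← add_sum_erase _ _ (mem_univ k),
      add_sub_cancel_left]
  rw [sum_congr rfl hoff, ← mul_sum, hrow, hdiag]
  linarith

theorem pageRank_eq_of_stationary {γ : ℝ} {v p : n → ℝ} {P : Matrix n n ℝ}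
    (hP : (1 - (1 - γ) • Pᵀ).det ≠ 0) (hp : p = γ • v + (1 - γ) • (Pᵀ *ᵥ p)) :
    pageRank γ v P = p := by
  have hsolve : (1 - (1 - γ) • Pᵀ) *ᵥ p = γ • v := by
    rw [sub_mulVec, one_mulVec, smul_mulVec, sub_eq_iff_eq_add, ← hp]
  rw [pageRank, ← mulVec_smul, ← hsolve, mulVec_mulVec,
    nonsing_inv_mul _ (isUnit_iff_ne_zero.mpr hP), one_mulVec]

theorem pageRank_eq_self_of_stationary {γ : ℝ} {v : n → ℝ} {P : Matrix n n ℝ}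
    (hP : (1 - (1 - γ) • Pᵀ).det ≠ 0) (hv : Pᵀ *ᵥ v = v) : pageRank γ v P = v :=
  pageRank_eq_of_stationary hP (by rw [hv, ← add_smul, add_sub_cancel, one_smul])

end PageRank

namespace FairnessLossExample

def P₁ : Matrix (Fin 3) (Fin 3) ℝ := !![0, 1, 0; 1, 0, 0; 0, 1, 0]

def P₂ : Matrix (Fin 3) (Fin 3) ℝ := !![0, 0, 1; 0, 0, 1; 1, 0, 0]

noncomputable def uniform : Fin 3 → ℝ := fun _ => 1 / 3

theorem P₁_mem_rowStochastic : P₁ ∈ rowStochastic ℝ (Fin 3) := by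
  rw [mem_rowStochastic_iff_sum]
  refine ⟨fun i j => ?_, fun i => ?_⟩ <;> fin_cases i <;> try fin_cases j
  all_goals simp [P₁, Fin.sum_univ_three]

theorem P₂_mem_rowStochastic : P₂ ∈ rowStochastic ℝ (Fin 3) := by
  rw [mem_rowStochastic_iff_sum]
  refine ⟨fun i j => ?_, fun i => ?_⟩ <;> fin_cases i <;> try fin_cases j
  all_goals simp [P₂, Fin.sum_univ_three]

theorem midpoint_mem_rowStochastic : (1 / 2 : ℝ) • (P₁ + P₂) ∈ rowStochastic ℝ (Fin 3) := by
  rw [smul_add]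
  exact convex_rowStochastic P₁_mem_rowStochastic P₂_mem_rowStochastic (by norm_num) (by norm_num)
    (by norm_num)

theorem pageRank_P₁ {γ : ℝ} (hγ0 : 0 < γ) (hγ1 : γ ≤ 1) : pageRank γ uniform P₁ =
    ![(γ ^ 2 - 3 * γ + 3) / (3 * (2 - γ)), (3 - 2 * γ) / (3 * (2 - γ)), γ / 3] := by
  refine pageRank_eq_of_stationary
    (det_one_sub_smul_transpose_ne_zero P₁_mem_rowStochastic (by linarith) (by linarith)) ?_
  have : 2 - γ ≠ 0 := by linarith
  ext i
  fin_cases i <;> simp [P₁, uniform, mulVec, dotProduct, Fin.sum_univ_three] <;> field_simp <;> ring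

theorem pageRank_P₂ {γ : ℝ} (hγ0 : 0 < γ) (hγ1 : γ ≤ 1) : pageRank γ uniform P₂ =
    ![(γ ^ 2 - 3 * γ + 3) / (3 * (2 - γ)), γ / 3, (3 - 2 * γ) / (3 * (2 - γ))] := by
  refine pageRank_eq_of_stationary
    (det_one_sub_smul_transpose_ne_zero P₂_mem_rowStochastic (by linarith) (by linarith)) ?_
  have : 2 - γ ≠ 0 := by linarith
  ext i
  fin_cases i <;> simp [P₂, uniform, mulVec, dotProduct, Fin.sum_univ_three] <;> field_simp <;> ring

theorem pageRank_midpoint {γ : ℝ} (hγ0 : 0 < γ) (hγ1 : γ ≤ 1) :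
    pageRank γ uniform ((1 / 2 : ℝ) • (P₁ + P₂)) = uniform := by
  refine pageRank_eq_self_of_stationary
    (det_one_sub_smul_transpose_ne_zero midpoint_mem_rowStochastic (by linarith) (by linarith)) ?_
  ext i
  fin_cases i <;> simp [P₁, P₂, uniform, mulVec, dotProduct, Fin.sum_univ_three] <;> norm_num

end FairnessLossExample

open FairnessLossExample in
/-- The fairness loss `L(P) = (1/K) Σₖ (1ₖᵀ p(P) - φₖ)²` is not convex in `P`:
for `n = 3`, any `γ ∈ (0,1)`, uniform restart vector, groups `{1}` and `{2,3}`, the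
concrete row-stochastic matrices `P₁, P₂` and targets `φ` below satisfy
`L(P₁) = L(P₂) = 0` but `L((P₁+P₂)/2) > 0`, contradicting convexity. -/
theorem fairness_loss_not_convex (γ : ℝ) (hγ0 : 0 < γ) (hγ1 : γ < 1) :
    let v : Fin 3 → ℝ := fun _ => 1 / 3
    let pr : Matrix (Fin 3) (Fin 3) ℝ → (Fin 3 → ℝ) :=
      fun P => γ • ((1 - (1 - γ) • Pᵀ)⁻¹ *ᵥ v)
    let c1 : Fin 3 → ℝ := ![1, 0, 0]
    let c2 : Fin 3 → ℝ := ![0, 1, 1]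
    let φ1 : ℝ := (γ ^ 2 - 3 * γ + 3) / (3 * (2 - γ))
    let φ2 : ℝ := 1 - φ1
    let L : Matrix (Fin 3) (Fin 3) ℝ → ℝ :=
      fun P => (1 / 2) * ((c1 ⬝ᵥ pr P - φ1) ^ 2 + (c2 ⬝ᵥ pr P - φ2) ^ 2)
    let P1 : Matrix (Fin 3) (Fin 3) ℝ := !![0, 1, 0; 1, 0, 0; 0, 1, 0]
    let P2 : Matrix (Fin 3) (Fin 3) ℝ := !![0, 0, 1; 0, 0, 1; 1, 0, 0]
    L P1 = 0 ∧ L P2 = 0 ∧ 0 < L ((1 / 2 : ℝ) • (P1 + P2)) := by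
  intro v pr c1 c2 φ1 φ2 L P1 P2
  have hp₁ : pr P1 = _ := pageRank_P₁ hγ0 hγ1.le
  have hp₂ : pr P2 = _ := pageRank_P₂ hγ0 hγ1.le
  have hpmid : pr ((1 / 2 : ℝ) • (P1 + P2)) = uniform := pageRank_midpoint hγ0 hγ1.le
  have hmass (p : Fin 3 → ℝ) : c1 ⬝ᵥ p = p 0 ∧ c2 ⬝ᵥ p = p 1 + p 2 := by
    simp [c1, c2, dotProduct, Fin.sum_univ_three]
  have h2γ : 2 - γ ≠ 0 := by linarith
  have hφ1 : 1 / 3 < φ1 := by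
    have hgap : φ1 - 1 / 3 = (1 - γ) ^ 2 / (3 * (2 - γ)) := by
      simp only [φ1]
      field_simp
      ring
    rw [← sub_pos, hgap]
    exact div_pos (by nlinarith) (by linarith)
  have hφ2 : (3 - 2 * γ) / (3 * (2 - γ)) + γ / 3 = φ2 := by
    simp only [φ2, φ1]
    field_simp
    ring
  have hL_eq_zero {P} (h1 : c1 ⬝ᵥ pr P = φ1) (h2 : c2 ⬝ᵥ pr P = φ2) : L P = 0 := by
    simp only [L, h1, h2, sub_self]
    norm_num
  refine ⟨hL_eq_zero ?_ ?_, hL_eq_zero ?_ ?_, ?_⟩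
  · rw [hp₁, (hmass _).1]
    rfl
  · rw [hp₁, (hmass _).2]
    exact hφ2
  · rw [hp₂, (hmass _).1]
    rfl
  · rw [hp₂, (hmass _).2, add_comm]
    exact hφ2
  · simp only [L, hpmid, hmass, uniform, φ2]
    nlinarith
end

section
/- Let s ∈ ℝ^N and let s* be the Euclidean projection of s onto the probability simplex {t ∈ ℝ^N : Σᵢ tᵢ = 1, tᵢ ≥ 0}. Rank the coordinates so s₁ ≥ ⋯ ≥ s_N, set k(s) = max{k : 1 + k·sₖ > Σ_{j≤k} sⱼ} and τ = (Σ_{j≤k(s)} sⱼ − 1)/k(s). Then s*ᵢ = max(0, sᵢ − τ) for every i. -/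
open BigOperators Finset

/-!
With `t i = max 0 (s i - τ)`, one has `s i - t i = τ + min 0 (s i - τ)`, and the second summand
vanishes wherever `t i > 0`. Hence for any `u ≥ 0` with the same total mass as `t`,
`⟪s - t, t - u⟫ ≥ τ · (∑ t - ∑ u) = 0`, which is the variational characterization of the
projection. Sortedness and the maximality of `k` make `τ` separate the coordinates `i ≤ k`
(above `τ`) from the others (at most `τ`), so that `t` sums to `1`.
-/

lemma sq_sub_max_zero_sub_add_le (x y τ : ℝ) (hy : 0 ≤ y) :
    (x - max 0 (x - τ)) ^ 2 + 2 * τ * (max 0 (x - τ) - y) ≤ (x - y) ^ 2 := by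
  rcases le_total (x - τ) 0 with hx | hx
  · rw [max_eq_left hx]
    nlinarith
  · rw [max_eq_right hx]
    nlinarith [sq_nonneg (x - y - τ)]

section Threshold

variable {ι : Type*} [Fintype ι]

theorem sum_sq_sub_max_zero_sub_le (s u : ι → ℝ) (τ : ℝ) (hu : ∀ i, 0 ≤ u i)
    (hsum : ∑ i, u i = ∑ i, max 0 (s i - τ)) :
    ∑ i, (s i - max 0 (s i - τ)) ^ 2 ≤ ∑ i, (s i - u i) ^ 2 := by
  have hcross : ∑ i, 2 * τ * (max 0 (s i - τ) - u i) = 0 := by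
    rw [← mul_sum, sum_sub_distrib, hsum, sub_self, mul_zero]
  calc ∑ i, (s i - max 0 (s i - τ)) ^ 2
      = ∑ i, ((s i - max 0 (s i - τ)) ^ 2 + 2 * τ * (max 0 (s i - τ) - u i)) := by
        rw [sum_add_distrib, hcross, add_zero]
    _ ≤ ∑ i, (s i - u i) ^ 2 :=
        sum_le_sum fun i _ => sq_sub_max_zero_sub_add_le (s i) (u i) τ (hu i)

theorem sum_max_zero_sub_eq (s : ι → ℝ) (τ : ℝ) (A : Finset ι)
    (hA : ∀ i ∈ A, τ ≤ s i) (hAc : ∀ i ∉ A, s i ≤ τ) :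
    ∑ i, max 0 (s i - τ) = ∑ i ∈ A, s i - #A * τ := by
  rw [← sum_subset (subset_univ A) fun i _ hi => max_eq_left (sub_nonpos.2 (hAc i hi)),
    sum_congr rfl fun i hi => max_eq_right (sub_nonneg.2 (hA i hi)),
    sum_sub_distrib, sum_const, nsmul_eq_mul]

end Threshold

namespace Fin

variable {N : ℕ}

lemma sum_Iic_of_val_eq_add_one (f : Fin N → ℝ) {j k : Fin N} (hj : (j : ℕ) = k + 1) :
    ∑ i ∈ Iic j, f i = f j + ∑ i ∈ Iic k, f i := by
  rw [Iic_eq_cons_Iio, Finset.sum_cons]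
  congr 2
  ext i
  simp only [mem_Iio, mem_Iic, Fin.lt_def, Fin.le_def]
  omega

lemma div_lt_of_one_add_mul_gt_sum_Iic {s : Fin N → ℝ} {k : Fin N}
    (h : 1 + (((k : ℕ) + 1 : ℕ) : ℝ) * s k > ∑ i ∈ Iic k, s i) :
    ((∑ i ∈ Iic k, s i) - 1) / (((k : ℕ) + 1 : ℕ) : ℝ) < s k := by
  rw [div_lt_iff₀ (by positivity)]
  linarith

lemma le_div_of_one_add_mul_le_sum_Iic {s : Fin N → ℝ} {j k : Fin N} (hj : (j : ℕ) = k + 1)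
    (h : ¬ 1 + (((j : ℕ) + 1 : ℕ) : ℝ) * s j > ∑ i ∈ Iic j, s i) :
    s j ≤ ((∑ i ∈ Iic k, s i) - 1) / (((k : ℕ) + 1 : ℕ) : ℝ) := by
  rw [le_div_iff₀ (by positivity)]
  rw [sum_Iic_of_val_eq_add_one s hj, hj] at h
  push_cast at h ⊢
  linarith

end Fin

/-- Projection onto the probability simplex. If `s` is sorted nonincreasingly,
`k` is the largest index with `1 + (k+1)·s k > Σ_{j ≤ k} s j` (0-based indices), and
`τ = (Σ_{j ≤ k} s j - 1)/(k+1)`, then the vector `i ↦ max 0 (s i - τ)` is the Euclidean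
projection of `s` onto the probability simplex. -/
theorem simplex_projection_formula {N : ℕ} (s : Fin N → ℝ) (hs : Antitone s)
    (k : Fin N)
    (hk : 1 + (((k : ℕ) + 1 : ℕ) : ℝ) * s k > ∑ j ∈ Finset.Iic k, s j)
    (hkmax : ∀ k' : Fin N,
      1 + (((k' : ℕ) + 1 : ℕ) : ℝ) * s k' > ∑ j ∈ Finset.Iic k', s j → k' ≤ k) :
    let τ : ℝ := ((∑ j ∈ Finset.Iic k, s j) - 1) / (((k : ℕ) + 1 : ℕ) : ℝ)
    let t : Fin N → ℝ := fun i => max 0 (s i - τ)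
    (∀ i, 0 ≤ t i) ∧ (∑ i, t i = 1) ∧
      ∀ u : Fin N → ℝ, (∀ i, 0 ≤ u i) → ∑ i, u i = 1 →
        ∑ i, (s i - t i) ^ 2 ≤ ∑ i, (s i - u i) ^ 2 := by
  intro τ t
  have hτ_le : ∀ i ∈ Iic k, τ ≤ s i := fun i hi =>
    (Fin.div_lt_of_one_add_mul_gt_sum_Iic hk).le.trans (hs (mem_Iic.1 hi))
  have hle_τ : ∀ i ∉ Iic k, s i ≤ τ := fun i hi => by
    have hki : k < i := not_le.1 (mem_Iic.not.1 hi)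
    let j : Fin N := ⟨k + 1, by omega⟩
    have hkj : k < j := Fin.lt_def.2 (Nat.lt_succ_self _)
    exact (hs (show j ≤ i from Fin.le_def.2 hki)).trans
      (Fin.le_div_of_one_add_mul_le_sum_Iic rfl fun h => (hkmax j h).not_gt hkj)
  have hsum : ∑ i, t i = 1 := by
    rw [sum_max_zero_sub_eq s τ _ hτ_le hle_τ, Fin.card_Iic,
      mul_div_cancel₀ _ (by positivity : (((k : ℕ) + 1 : ℕ) : ℝ) ≠ 0)]
    ring
  exact ⟨fun i => le_max_left _ _, hsum, fun u hu hu1 =>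
    sum_sq_sub_max_zero_sub_le s u τ hu (hu1.trans hsum.symm)⟩
end

section
/- Let ℓ, u ∈ ℝ^N with ℓᵢ ≤ uᵢ, and suppose the set F = {t ∈ ℝ^N : Σᵢ tᵢ = 1, ℓᵢ ≤ tᵢ ≤ uᵢ} is nonempty. For s ∈ ℝ^N, the Euclidean projection of s onto F is given coordinatewise by s*ᵢ = clip(sᵢ + λ*, ℓᵢ, uᵢ), where λ* ∈ ℝ is any solution of h(λ) := Σᵢ clip(sᵢ + λ, ℓᵢ, uᵢ) − 1 = 0, and such a root exists. -/
/-!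
Since `clip (·) a b` is the projection onto `[a, b]`, it satisfies the variational inequality
`(x - clip x a b) * (clip x a b - t) ≥ 0` for `t ∈ [a, b]`. Summing it at `x = sᵢ + λ` against any
`t ∈ F`, the `λ`-terms cancel because `clip (s + λ)` and `t` have the same coordinate sum, leaving
`⟨s - p, p - t⟩ ≥ 0` for `p = clip (s + λ)`; by Pythagoras `‖s - t‖² ≥ ‖s - p‖²`.
A root `λ` exists by the intermediate value theorem: the coordinate sum of `clip (s + λ)` is
continuous in `λ` and equals `Σ ℓᵢ ≤ 1` for `λ ≪ 0` and `Σ uᵢ ≥ 1` for `λ ≫ 0`.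
-/

open BigOperators

/-- `clip x a b` equals `a` if `x ≤ a`, `x` if `a < x < b`, and `b` if `x ≥ b`
(for `a ≤ b`). -/
def clip (x a b : ℝ) : ℝ := min (max x a) b

open Filter Finset

section Clip

variable {x a b : ℝ}

lemma le_clip (hab : a ≤ b) : a ≤ clip x a b :=
  le_min (le_max_right x a) hab

lemma clip_le : clip x a b ≤ b :=
  min_le_right _ _

lemma clip_of_le_left (hxa : x ≤ a) (hab : a ≤ b) : clip x a b = a := by
  rw [clip, max_eq_right hxa, min_eq_left hab]

lemma clip_of_right_le (hbx : b ≤ x) (hab : a ≤ b) : clip x a b = b := by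
  rw [clip, max_eq_left (hab.trans hbx), min_eq_right hbx]

lemma sub_clip_mul_clip_sub_nonneg {t : ℝ} (hat : a ≤ t) (htb : t ≤ b) :
    0 ≤ (x - clip x a b) * (clip x a b - t) := by
  rcases le_total x a with hxa | hax
  · rw [clip_of_le_left hxa (hat.trans htb)]
    exact mul_nonneg_of_nonpos_of_nonpos (by linarith) (by linarith)
  rcases le_total b x with hbx | hxb
  · rw [clip_of_right_le hbx (hat.trans htb)]
    exact mul_nonneg (by linarith) (by linarith)
  · simp [clip, max_eq_left hax, min_eq_left hxb]

end Clip

section Sums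

variable {ι : Type*} [Fintype ι]

lemma sum_sq_sub_le_of_sum_mul_nonneg (s p t : ι → ℝ)
    (h : 0 ≤ ∑ i, (s i - p i) * (p i - t i)) :
    ∑ i, (s i - p i) ^ 2 ≤ ∑ i, (s i - t i) ^ 2 := by
  have pythagoras : ∑ i, (s i - t i) ^ 2 = ∑ i, (s i - p i) ^ 2 + ∑ i, (p i - t i) ^ 2
      + 2 * ∑ i, (s i - p i) * (p i - t i) := by
    rw [mul_sum, ← sum_add_distrib, ← sum_add_distrib]
    exact sum_congr rfl fun i _ => by ring
  have := sum_nonneg fun i (_ : i ∈ univ) => sq_nonneg (p i - t i)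
  linarith

lemma sum_add_const_sub_mul_sub (s p t : ι → ℝ) (lam : ℝ) (hpt : ∑ i, p i = ∑ i, t i) :
    ∑ i, (s i + lam - p i) * (p i - t i) = ∑ i, (s i - p i) * (p i - t i) := by
  simp only [add_sub_right_comm, add_mul, sum_add_distrib, ← mul_sum, sum_sub_distrib, hpt,
    sub_self, mul_zero, add_zero]

lemma sum_sq_sub_clip_le (s ℓ u t : ι → ℝ) (lam : ℝ) (ht : ∀ i, ℓ i ≤ t i ∧ t i ≤ u i)
    (hsum : ∑ i, clip (s i + lam) (ℓ i) (u i) = ∑ i, t i) :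
    ∑ i, (s i - clip (s i + lam) (ℓ i) (u i)) ^ 2 ≤ ∑ i, (s i - t i) ^ 2 := by
  apply sum_sq_sub_le_of_sum_mul_nonneg
  rw [← sum_add_const_sub_mul_sub s _ t lam hsum]
  exact sum_nonneg fun i _ => sub_clip_mul_clip_sub_nonneg (ht i).1 (ht i).2

lemma exists_sum_clip_add_eq (s ℓ u : ι → ℝ) (hlu : ∀ i, ℓ i ≤ u i) {c : ℝ}
    (hc : c ∈ Set.Icc (∑ i, ℓ i) (∑ i, u i)) :
    ∃ lam : ℝ, ∑ i, clip (s i + lam) (ℓ i) (u i) = c := by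
  have hcont : Continuous fun lam => ∑ i, clip (s i + lam) (ℓ i) (u i) := by
    simp only [clip]
    fun_prop
  obtain ⟨lam₀, hlam₀⟩ :=
    (eventually_all.2 fun i => eventually_le_atBot (ℓ i - s i)).exists
  obtain ⟨lam₁, hlam₁⟩ :=
    (eventually_all.2 fun i => eventually_ge_atTop (u i - s i)).exists
  have h₀ : ∑ i, clip (s i + lam₀) (ℓ i) (u i) = ∑ i, ℓ i :=
    sum_congr rfl fun i _ => clip_of_le_left (by linarith [hlam₀ i]) (hlu i)
  have h₁ : ∑ i, clip (s i + lam₁) (ℓ i) (u i) = ∑ i, u i :=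
    sum_congr rfl fun i _ => clip_of_right_le (by linarith [hlam₁ i]) (hlu i)
  exact intermediate_value_univ lam₀ lam₁ hcont (by rwa [h₀, h₁])

end Sums

/-- Projection onto the intersection of the probability simplex and a box.
If `F = {t : Σ tᵢ = 1, ℓᵢ ≤ tᵢ ≤ uᵢ}` is nonempty, then a root `λ*` of
`h(λ) = Σᵢ clip(sᵢ + λ, ℓᵢ, uᵢ) - 1` exists, and for any such root the vector
`i ↦ clip(sᵢ + λ*, ℓᵢ, uᵢ)` is the Euclidean projection of `s` onto `F`. -/
theorem simplex_box_projection_formula {N : ℕ} (s ℓ u : Fin N → ℝ)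
    (hlu : ∀ i, ℓ i ≤ u i)
    (hF : ∃ t : Fin N → ℝ, (∑ i, t i = 1) ∧ ∀ i, ℓ i ≤ t i ∧ t i ≤ u i) :
    (∃ lam : ℝ, ∑ i, clip (s i + lam) (ℓ i) (u i) = 1) ∧
    ∀ lam : ℝ, (∑ i, clip (s i + lam) (ℓ i) (u i) = 1) →
      (∀ i, ℓ i ≤ clip (s i + lam) (ℓ i) (u i) ∧ clip (s i + lam) (ℓ i) (u i) ≤ u i) ∧
      ∀ t : Fin N → ℝ, (∑ i, t i = 1) → (∀ i, ℓ i ≤ t i ∧ t i ≤ u i) →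
        ∑ i, (s i - clip (s i + lam) (ℓ i) (u i)) ^ 2 ≤ ∑ i, (s i - t i) ^ 2 := by
  obtain ⟨t₀, ht₀sum, ht₀⟩ := hF
  have hbounds : (1 : ℝ) ∈ Set.Icc (∑ i, ℓ i) (∑ i, u i) := by
    rw [← ht₀sum]
    exact ⟨sum_le_sum fun i _ => (ht₀ i).1, sum_le_sum fun i _ => (ht₀ i).2⟩
  refine ⟨exists_sum_clip_add_eq s ℓ u hlu hbounds, fun lam hroot => ?_⟩
  refine ⟨fun i => ⟨le_clip (hlu i), clip_le⟩, fun t htsum ht => ?_⟩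
  exact sum_sq_sub_clip_le s ℓ u t lam ht (hroot.trans htsum.symm)
end
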